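/- arXiv:2005.12359 — 3 statements merged into one kernel-verified Lean document; each statement's English description precedes it below -/
import Mathlib

section
/- The depth-N signature transform of a path is invariant under reparameterisation: if f : [a,b] → ℝ^d is continuous and piecewise continuously differentiable, and ψ : [c,d] → [a,b] is continuously differentiable, increasing, and surjective, then Sig^N(f ∘ ψ) = Sig^N(f). -/
open MeasureTheory intervalIntegral

/-- A path is continuous on `[a,b]` and piecewise continuously differentiable:
there is a finite partition of `[a,b]` on whose closed subintervals `f` is `C¹`. -/
def PiecewiseC1 {E : Type*} [NormedAddCommGroup E] [NormedSpace ℝ E]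
    (f : ℝ → E) (a b : ℝ) : Prop :=
  ContinuousOn f (Set.Icc a b) ∧
    ∃ (n : ℕ) (t : Fin (n + 1) → ℝ), StrictMono t ∧ t 0 = a ∧ t (Fin.last n) = b ∧
      ∀ k : Fin n, ContDiffOn ℝ 1 f (Set.Icc (t k.castSucc) (t k.succ))

/-- Auxiliary iterated integral: the list holds indices from the *outermost*
integral inwards. `sigAux f a (i_k :: ⋯ :: i_1 :: []) t
= ∫_{a<t_1<⋯<t_k<t} ∏_j f'_{i_j}(t_j)`. -/
noncomputable def sigAux {d : ℕ} (f : ℝ → Fin d → ℝ) (a : ℝ) :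
    List (Fin d) → ℝ → ℝ
  | [], _ => 1
  | i :: l, t => ∫ s in a..t, sigAux f a l s * deriv (fun u => f u i) s

/-- The signature term of the path `f` on `[a,b]` indexed by the multi-index
`l = [i_1, …, i_k]`, i.e. `∫_{a<t_1<⋯<t_k<b} ∏_{j=1}^k f'_{i_j}(t_j) dt_1⋯dt_k`. -/
noncomputable def sigTerm {d : ℕ} (f : ℝ → Fin d → ℝ) (a b : ℝ)
    (l : List (Fin d)) : ℝ :=
  sigAux f a l.reverse b

lemma exists_piece {n : ℕ} {t : Fin (n+1) → ℝ} (ht : StrictMono t) {x : ℝ}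
    (h0 : t 0 ≤ x) (hl : x ≤ t (Fin.last n)) (hx : x ∉ Set.range t) :
    ∃ k : Fin n, x ∈ Set.Ioo (t k.castSucc) (t k.succ) := by
  have hn : n ≠ 0 := by
    rintro rfl
    exact hx ⟨0, le_antisymm (hl.trans_eq (by rfl)) h0 ▸ rfl⟩
  classical
  set S : Finset (Fin (n+1)) := Finset.univ.filter (fun j => t j ≤ x) with hS
  have h0S : (0 : Fin (n+1)) ∈ S := by simp [hS, h0]
  have hne : S.Nonempty := ⟨0, h0S⟩
  set m := S.max' hne with hm
  have hmS : m ∈ S := S.max'_mem hne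
  have htm : t m ≤ x := by simpa [hS] using hmS
  have hmlast : m ≠ Fin.last n := by
    rintro h
    exact hx ⟨m, le_antisymm htm (h ▸ hl)⟩
  have hmlt : (m : ℕ) < n := by
    have := Fin.lt_last_iff_ne_last.mpr hmlast
    simpa [Fin.lt_iff_val_lt_val] using this
  refine ⟨⟨m, hmlt⟩, ?_, ?_⟩
  · have heq : (⟨m, hmlt⟩ : Fin n).castSucc = m := by ext; rfl
    rw [heq]
    exact lt_of_le_of_ne htm (fun h => hx ⟨m, h⟩)
  · have hsucc : (⟨m, hmlt⟩ : Fin n).succ = ⟨(m : ℕ)+1, Nat.succ_lt_succ hmlt⟩ := rfl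
    rw [hsucc]
    by_contra h
    push_neg at h
    have : (⟨(m : ℕ)+1, Nat.succ_lt_succ hmlt⟩ : Fin (n+1)) ∈ S := by simp [hS, h]
    have := S.le_max' _ this
    rw [← hm] at this
    exact absurd this (by simp [Fin.le_iff_val_le_val])


/-- Invariance of the depth-N signature transform under reparameterisation. -/
theorem signature_invariant_under_reparameterisation
    {d N : ℕ} {a b c e : ℝ} (hab : a < b) (hce : c < e)
    (f : ℝ → Fin d → ℝ) (ψ : ℝ → ℝ)
    (hf : PiecewiseC1 f a b)
    (hψ : ContDiffOn ℝ 1 ψ (Set.Icc c e))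
    (hmono : StrictMonoOn ψ (Set.Icc c e))
    (hsurj : ψ '' Set.Icc c e = Set.Icc a b)
    (l : List (Fin d)) (hl : 1 ≤ l.length) (hlN : l.length ≤ N) :
    sigTerm (fun t => f (ψ t)) c e l = sigTerm f a b l := by
  obtain ⟨hcont, n, tt, htt, ht0, htl, hC1⟩ := hf
  have hmem : ∀ s ∈ Set.Icc c e, ψ s ∈ Set.Icc a b := by
    intro s hs; rw [← hsurj]; exact Set.mem_image_of_mem ψ hs
  have hcm : c ∈ Set.Icc c e := Set.left_mem_Icc.mpr hce.le
  have hem : e ∈ Set.Icc c e := Set.right_mem_Icc.mpr hce.le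
  have hψc : ψ c = a := by
    obtain ⟨s, hs, hsa⟩ : a ∈ ψ '' Set.Icc c e := hsurj ▸ Set.left_mem_Icc.mpr hab.le
    refine le_antisymm ?_ (hmem c hcm).1
    calc ψ c ≤ ψ s := hmono.monotoneOn hcm hs hs.1
    _ = a := hsa
  have hψe : ψ e = b := by
    obtain ⟨s, hs, hsb⟩ : b ∈ ψ '' Set.Icc c e := hsurj ▸ Set.right_mem_Icc.mpr hab.le
    refine le_antisymm (hmem e hem).2 ?_
    calc b = ψ s := hsb.symm
    _ ≤ ψ e := hmono.monotoneOn hs hem hs.2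
  set ψ' : ℝ → ℝ := fun s => derivWithin ψ (Set.Icc c e) s with hψ'def
  have hψder : ∀ s ∈ Set.Icc c e, HasDerivWithinAt ψ (ψ' s) (Set.Icc c e) s :=
    fun s hs => ((hψ.differentiableOn one_ne_zero) s hs).hasDerivWithinAt
  have hψat : ∀ s ∈ Set.Ioo c e, HasDerivAt ψ (ψ' s) s := fun s hs =>
    (hψder s (Set.Ioo_subset_Icc_self hs)).hasDerivAt (Icc_mem_nhds hs.1 hs.2)
  have hψ'nn : ∀ s ∈ Set.Ioo c e, 0 ≤ ψ' s := by
    intro s hs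
    have hd := hψat s hs
    have h1 : Filter.Tendsto (slope ψ s) (nhdsWithin s (Set.Ioi s)) (nhds (ψ' s)) :=
      (hasDerivAt_iff_tendsto_slope.mp hd).mono_left
        (nhdsWithin_mono _ (fun y hy => ne_of_gt hy))
    refine ge_of_tendsto h1 ?_
    filter_upwards [Ioo_mem_nhdsGT_of_mem ⟨le_refl s, hs.2⟩] with y hy
    rw [slope_def_field]
    apply div_nonneg _ (sub_nonneg.mpr hy.1.le)
    exact sub_nonneg.mpr (hmono.monotoneOn (Set.Ioo_subset_Icc_self hs)
      ⟨(hs.1.trans hy.1).le, hy.2.le⟩ hy.1.le)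
  -- finite exceptional set
  set K : Set ℝ := Set.Icc c e ∩ ψ ⁻¹' (Set.range tt) with hKdef
  have hKfin : K.Finite := by
    apply Set.Finite.of_finite_image (f := ψ)
    · exact (Set.finite_range tt).subset (by rintro _ ⟨x, hx, rfl⟩; exact hx.2)
    · exact hmono.injOn.mono Set.inter_subset_left
  have hK0 : ∀ᵐ s ∂(volume : Measure ℝ), s ∉ K :=
    measure_eq_zero_iff_ae_notMem.mp (hKfin.measure_zero _)
  have key : ∀ L : List (Fin d), ∀ t ∈ Set.Icc c e,
      sigAux (fun s => f (ψ s)) c L t = sigAux f a L (ψ t) := by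
    intro L
    induction L with
    | nil => intro t _; rfl
    | cons i l ih =>
      intro t ht
      have hct : c ≤ t := ht.1
      have hte : t ≤ e := ht.2
      have haψt : a ≤ ψ t := (hmem t ht).1
      simp only [sigAux]
      rw [intervalIntegral.integral_of_le hct, intervalIntegral.integral_of_le haψt,
        integral_Ioc_eq_integral_Ioo, integral_Ioc_eq_integral_Ioo]
      have hsub : Set.Ioo c t ⊆ Set.Icc c e := fun x hx => ⟨hx.1.le, (hx.2.le.trans hte)⟩
      have him : ψ '' Set.Ioo c t = Set.Ioo a (ψ t) := by
        apply Set.Subset.antisymm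
        · rintro _ ⟨s, hs, rfl⟩
          exact ⟨hψc ▸ hmono hcm (hsub hs) hs.1, hmono (hsub hs) ht hs.2⟩
        · have h2 := intermediate_value_Ioo hct (hψ.continuousOn.mono
            (Set.Icc_subset_Icc le_rfl hte))
          rw [hψc] at h2
          exact h2
      have cov := integral_image_eq_integral_abs_deriv_smul measurableSet_Ioo
        (fun x hx => (hψder x (hsub hx)).mono hsub)
        (hmono.injOn.mono hsub)
        (fun u => sigAux f a l u * deriv (fun x => f x i) u)
      rw [him] at cov
      rw [cov]
      apply MeasureTheory.integral_congr_ae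
      filter_upwards [ae_restrict_mem measurableSet_Ioo, ae_restrict_of_ae hK0] with s hs hsK
      have hsIcc : s ∈ Set.Icc c e := hsub hs
      have hsIoo : s ∈ Set.Ioo c e := ⟨hs.1, lt_of_lt_of_le hs.2 hte⟩
      have hψs : ψ s ∈ Set.Icc a b := hmem s hsIcc
      have hψsS : ψ s ∉ Set.range tt := fun h => hsK ⟨hsIcc, h⟩
      obtain ⟨k, hk⟩ := exists_piece htt (ht0 ▸ hψs.1) (htl ▸ hψs.2) hψsS
      have hfd : HasDerivAt (fun u => f u i) (deriv (fun u => f u i) (ψ s)) (ψ s) := by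
        have h1 : ContDiffOn ℝ 1 (fun u => f u i)
            (Set.Icc (tt k.castSucc) (tt k.succ)) := contDiffOn_pi.mp (hC1 k) i
        have h2 := (h1.differentiableOn one_ne_zero) (ψ s) (Set.Ioo_subset_Icc_self hk)
        exact (h2.differentiableAt (Icc_mem_nhds hk.1 hk.2)).hasDerivAt
      have hcomp : HasDerivAt (fun u => f (ψ u) i)
          (deriv (fun u => f u i) (ψ s) * ψ' s) s := hfd.comp s (hψat s hsIoo)
      rw [smul_eq_mul, abs_of_nonneg (hψ'nn s hsIoo), ih s hsIcc, hcomp.deriv]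
      ring
  simp only [sigTerm]
  rw [key l.reverse e hem, hψe]
end

section
/- Chen's identity at level 2: let f : [a,b] → ℝ^d and g : [b,c] → ℝ^d be continuous piecewise continuously differentiable paths with f(b) = g(b), and let h : [a,c] → ℝ^d be their concatenation. Then for all indices i, j: S^{(i,j)}_{[a,c]}(h) = S^{(i,j)}_{[a,b]}(f) + S^{(i,j)}_{[b,c]}(g) + (f_i(b)−f_i(a))·(g_j(c)−g_j(b)). -/
open MeasureTheory intervalIntegral Filter

/-- Second-level signature term of a path indexed by (i, j):
the integral of (f_i(t) - f_i(a)) * f_j'(t) over the interval. -/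
noncomputable def S2 {d : ℕ} (f : ℝ → Fin d → ℝ) (a b : ℝ) (i j : Fin d) : ℝ :=
  ∫ t in a..b, (f t i - f a i) * deriv (fun s => f s j) t

/-- Second-level signature term of a two-channel path given by real functions g, h. -/
noncomputable def S2r (g h : ℝ → ℝ) (u v : ℝ) : ℝ :=
  ∫ t in u..v, (g t - g u) * deriv h t

/-- The Levy area of a planar path with channels p, q on the interval from u to v. -/
noncomputable def levyArea (p q : ℝ → ℝ) (u v : ℝ) : ℝ :=
  (1 / 2) * ∫ t in u..v, ((p t - p u) * deriv q t - (q t - q u) * deriv p t)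

lemma single_integrable {φ F : ℝ → ℝ} {u v : ℝ} (huv : u ≤ v)
    (hφ : ContDiffOn ℝ 1 φ (Set.Icc u v)) (hF : ContinuousOn F (Set.Icc u v)) :
    IntervalIntegrable (fun s => F s * deriv φ s) volume u v := by
  rcases eq_or_lt_of_le huv with rfl | hlt
  · exact IntervalIntegrable.refl
  have hψ : ContinuousOn (fun s => F s * derivWithin φ (Set.Icc u v) s) (Set.Icc u v) :=
    hF.mul (hφ.continuousOn_derivWithin (uniqueDiffOn_Icc hlt) le_rfl)
  have hbase : IntervalIntegrable (fun s => F s * derivWithin φ (Set.Icc u v) s) volume u v := by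
    apply ContinuousOn.intervalIntegrable
    rwa [Set.uIcc_of_le huv]
  apply hbase.congr_ae
  have hv : ∀ᵐ t : ℝ, t ≠ v := by
    refine ae_iff.mpr ?_
    simpa using measure_singleton (v : ℝ)
  rw [Filter.EventuallyEq, ae_restrict_iff' measurableSet_uIoc]
  filter_upwards [hv] with t htv ht
  rw [Set.uIoc_of_le huv] at ht
  have ht' : t ∈ Set.Ioo u v := ⟨ht.1, lt_of_le_of_ne ht.2 htv⟩
  rw [derivWithin_of_mem_nhds (Icc_mem_nhds ht'.1 ht'.2)]

lemma single_ftc {φ : ℝ → ℝ} {u v : ℝ} (huv : u ≤ v)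
    (hφ : ContDiffOn ℝ 1 φ (Set.Icc u v)) :
    ∫ s in u..v, deriv φ s = φ v - φ u := by
  apply intervalIntegral.integral_eq_sub_of_hasDeriv_right_of_le huv hφ.continuousOn
  · intro t ht
    have hd := (hφ.differentiableOn one_ne_zero) t (Set.Ioo_subset_Icc_self ht)
    exact ((hd.differentiableAt (Icc_mem_nhds ht.1 ht.2)).hasDerivAt).hasDerivWithinAt
  · simpa using single_integrable huv hφ (continuousOn_const (c := (1:ℝ)))

lemma piece_integrable {φ F : ℝ → ℝ} : ∀ (n : ℕ) (t : Fin (n + 1) → ℝ), Monotone t →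
    (∀ k : Fin n, ContDiffOn ℝ 1 φ (Set.Icc (t k.castSucc) (t k.succ))) →
    ContinuousOn F (Set.Icc (t 0) (t (Fin.last n))) →
    IntervalIntegrable (fun s => F s * deriv φ s) volume (t 0) (t (Fin.last n)) := by
  intro n
  induction n with
  | zero =>
    intro t _ _ _
    simp only [Fin.last]
    exact IntervalIntegrable.refl
  | succ n ih =>
    intro t ht hφ hF
    have h1 : IntervalIntegrable (fun s => F s * deriv φ s) volume (t 0)
        (t (Fin.castSucc (Fin.last n))) := by
      refine ih (t ∘ Fin.castSucc) (ht.comp (Fin.strictMono_castSucc.monotone)) ?_ ?_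
      · intro k
        have := hφ k.castSucc
        exact this
      · refine hF.mono (Set.Icc_subset_Icc ?_ ?_)
        · simp [Fin.castSucc_zero]
        · exact ht (Fin.le_last _)
    have h2 : IntervalIntegrable (fun s => F s * deriv φ s) volume
        (t (Fin.castSucc (Fin.last n))) (t (Fin.last (n + 1))) := by
      have hle : t (Fin.castSucc (Fin.last n)) ≤ t (Fin.last (n + 1)) :=
        ht (Fin.le_last _)
      refine single_integrable hle ?_ ?_
      · simpa [Fin.succ_last] using hφ (Fin.last n)
      · refine hF.mono (Set.Icc_subset_Icc ?_ le_rfl)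
        exact ht (Fin.zero_le _)
    exact h1.trans h2

lemma piece_ftc {φ : ℝ → ℝ} : ∀ (n : ℕ) (t : Fin (n + 1) → ℝ), Monotone t →
    (∀ k : Fin n, ContDiffOn ℝ 1 φ (Set.Icc (t k.castSucc) (t k.succ))) →
    ∫ s in (t 0)..(t (Fin.last n)), deriv φ s = φ (t (Fin.last n)) - φ (t 0) := by
  intro n
  induction n with
  | zero =>
    intro t _ _
    simp [Fin.last]
  | succ n ih =>
    intro t ht hφ
    have h1 : IntervalIntegrable (fun s => deriv φ s) volume (t 0)
        (t (Fin.castSucc (Fin.last n))) := by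
      have := piece_integrable (F := fun _ => (1:ℝ)) n (t ∘ Fin.castSucc)
        (ht.comp (Fin.strictMono_castSucc.monotone))
        (fun k => by exact hφ k.castSucc) continuousOn_const
      simpa [Fin.castSucc_zero] using this
    have hle : t (Fin.castSucc (Fin.last n)) ≤ t (Fin.last (n + 1)) := ht (Fin.le_last _)
    have hcd : ContDiffOn ℝ 1 φ (Set.Icc (t (Fin.castSucc (Fin.last n)))
        (t (Fin.last (n + 1)))) := by simpa [Fin.succ_last] using hφ (Fin.last n)
    have h2 : IntervalIntegrable (fun s => deriv φ s) volume
        (t (Fin.castSucc (Fin.last n))) (t (Fin.last (n + 1))) := by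
      simpa using single_integrable hle hcd (continuousOn_const (c := (1:ℝ)))
    have hsplit := intervalIntegral.integral_add_adjacent_intervals h1 h2
    rw [← hsplit]
    have e1 := ih (t ∘ Fin.castSucc) (ht.comp (Fin.strictMono_castSucc.monotone))
      (fun k => by exact hφ k.castSucc)
    simp only [Function.comp, Fin.castSucc_zero] at e1
    rw [e1, single_ftc hle hcd]
    ring

lemma pc1_integrable {d : ℕ} {f : ℝ → Fin d → ℝ} {a b : ℝ}
    (hf : PiecewiseC1 f a b) (j : Fin d) {F : ℝ → ℝ}
    (hF : ContinuousOn F (Set.Icc a b)) :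
    IntervalIntegrable (fun s => F s * deriv (fun u => f u j) s) volume a b := by
  obtain ⟨-, n, t, hmono, h0, hlast, hcd⟩ := hf
  rw [← h0, ← hlast] at hF ⊢
  exact piece_integrable n t hmono.monotone
    (fun k => (contDiffOn_pi.mp (hcd k)) j) hF

lemma pc1_ftc {d : ℕ} {f : ℝ → Fin d → ℝ} {a b : ℝ}
    (hf : PiecewiseC1 f a b) (j : Fin d) :
    ∫ s in a..b, deriv (fun u => f u j) s = f b j - f a j := by
  obtain ⟨-, n, t, hmono, h0, hlast, hcd⟩ := hf
  rw [← h0, ← hlast]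
  exact piece_ftc n t hmono.monotone (fun k => (contDiffOn_pi.mp (hcd k)) j)


/-- Chen's identity at level 2 for the concatenation of two paths. -/
theorem chen_identity_level_two
    {d : ℕ} {a b c : ℝ} (hab : a ≤ b) (hbc : b ≤ c)
    (f g : ℝ → Fin d → ℝ)
    (hf : PiecewiseC1 f a b) (hg : PiecewiseC1 g b c)
    (hfg : f b = g b) (i j : Fin d) :
    S2 (fun t => if t ≤ b then f t else g t) a c i j
      = S2 f a b i j + S2 g b c i j + (f b i - f a i) * (g c j - g b j) := by
  have hbne : ∀ᵐ (t : ℝ), t ≠ b := by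
    refine ae_iff.mpr ?_
    simpa using measure_singleton (b : ℝ)
  have hdf : ∀ t : ℝ, t < b →
      deriv (fun s => (if s ≤ b then f s else g s) j) t = deriv (fun s => f s j) t := by
    intro t htb
    apply Filter.EventuallyEq.deriv_eq
    filter_upwards [Iio_mem_nhds htb] with s hs
    rw [if_pos (le_of_lt hs)]
  have hdg : ∀ t : ℝ, b < t →
      deriv (fun s => (if s ≤ b then f s else g s) j) t = deriv (fun s => g s j) t := by
    intro t htb
    apply Filter.EventuallyEq.deriv_eq
    filter_upwards [Ioi_mem_nhds htb] with s hs
    rw [if_neg (not_le.mpr hs)]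
  have hfi : ContinuousOn (fun t => f t i - f a i) (Set.Icc a b) :=
    ((continuous_apply i).comp_continuousOn hf.1).sub continuousOn_const
  have hgi : ContinuousOn (fun t => g t i - f a i) (Set.Icc b c) :=
    ((continuous_apply i).comp_continuousOn hg.1).sub continuousOn_const
  have hgb : ContinuousOn (fun t => g t i - g b i) (Set.Icc b c) :=
    ((continuous_apply i).comp_continuousOn hg.1).sub continuousOn_const
  have hA := pc1_integrable hf j hfi
  have hB := pc1_integrable hg j hgi
  have hB1 := pc1_integrable hg j hgb
  have hB2 := pc1_integrable hg j (continuousOn_const (c := g b i - f a i))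
  have hAeq : ∀ᵐ t : ℝ, t ∈ Set.uIoc a b →
      ((if t ≤ b then f t else g t) i - f a i) *
          deriv (fun s => (if s ≤ b then f s else g s) j) t
        = (f t i - f a i) * deriv (fun s => f s j) t := by
    filter_upwards [hbne] with t htb ht
    rw [Set.uIoc_of_le hab] at ht
    have hlt : t < b := lt_of_le_of_ne ht.2 htb
    rw [hdf t hlt, if_pos hlt.le]
  have hBeq : ∀ t ∈ Set.uIoc b c,
      ((if t ≤ b then f t else g t) i - f a i) *
          deriv (fun s => (if s ≤ b then f s else g s) j) t
        = (g t i - f a i) * deriv (fun s => g s j) t := by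
    intro t ht
    rw [Set.uIoc_of_le hbc] at ht
    rw [hdg t ht.1, if_neg (not_le.mpr ht.1)]
  have hΦab : IntervalIntegrable (fun t => ((if t ≤ b then f t else g t) i - f a i) *
      deriv (fun s => (if s ≤ b then f s else g s) j) t) volume a b := by
    refine hA.congr_ae ?_
    rw [Filter.EventuallyEq, ae_restrict_iff' measurableSet_uIoc]
    filter_upwards [hAeq] with t h ht
    exact (h ht).symm
  have hΦbc : IntervalIntegrable (fun t => ((if t ≤ b then f t else g t) i - f a i) *
      deriv (fun s => (if s ≤ b then f s else g s) j) t) volume b c := by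
    refine hB.congr_ae ?_
    rw [Filter.EventuallyEq, ae_restrict_iff' measurableSet_uIoc]
    filter_upwards with t ht
    exact (hBeq t ht).symm
  simp only [S2, if_pos hab]
  rw [← intervalIntegral.integral_add_adjacent_intervals hΦab hΦbc]
  rw [intervalIntegral.integral_congr_ae hAeq]
  have h2 : (∫ t in b..c, ((if t ≤ b then f t else g t) i - f a i) *
        deriv (fun s => (if s ≤ b then f s else g s) j) t)
      = ∫ t in b..c, ((g t i - g b i) * deriv (fun s => g s j) t
          + (g b i - f a i) * deriv (fun s => g s j) t) := by
    refine intervalIntegral.integral_congr_ae ?_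
    filter_upwards with t ht
    rw [hBeq t ht]
    ring
  rw [h2, intervalIntegral.integral_add hB1 hB2, intervalIntegral.integral_const_mul,
    pc1_ftc hg j]
  have hgf : g b i = f b i := by rw [hfg]
  rw [hgf]
  ring
end

section
/- Piecewise linear approximation converges in level-2 signature: let f : [a,b] → ℝ^d be continuously differentiable, and for each n let f_n be the piecewise linear interpolation of f at the uniform partition a = t_0 < t_1 < ⋯ < t_n = b with t_k = a + k(b−a)/n. Then for all indices i, j, S^{(i,j)}(f_n) → S^{(i,j)}(f) as n → ∞. -/
open MeasureTheory intervalIntegral Filter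

/-- Interval integrals only depend on values on the open interval. -/
lemma integral_congr_Ioo {u v : ℝ} (huv : u ≤ v) {φ ψ : ℝ → ℝ}
    (h : ∀ t ∈ Set.Ioo u v, φ t = ψ t) :
    ∫ t in u..v, φ t = ∫ t in u..v, ψ t := by
  rw [intervalIntegral.integral_of_le huv, intervalIntegral.integral_of_le huv,
    MeasureTheory.integral_Ioc_eq_integral_Ioo, MeasureTheory.integral_Ioc_eq_integral_Ioo]
  exact MeasureTheory.setIntegral_congr_fun measurableSet_Ioo h

/-- A function agreeing on the open interval with a function continuous on the closed
interval is interval integrable. -/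
lemma intervalIntegrable_of_eqOn_Ioo {u v : ℝ} (huv : u ≤ v) {φ ψ : ℝ → ℝ}
    (h : ∀ t ∈ Set.Ioo u v, φ t = ψ t) (hψ : ContinuousOn ψ (Set.Icc u v)) :
    IntervalIntegrable φ volume u v := by
  rw [intervalIntegrable_iff_integrableOn_Ioc_of_le huv]
  have h1 : IntegrableOn ψ (Set.Ioc u v) volume := by
    have h1' : IntervalIntegrable ψ volume u v := hψ.intervalIntegrable_of_Icc huv
    rwa [intervalIntegrable_iff_integrableOn_Ioc_of_le huv] at h1'
  have h2 : IntegrableOn φ (Set.Ioo u v) volume := by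
    refine (h1.mono_set Set.Ioo_subset_Ioc_self).congr ?_
    filter_upwards [MeasureTheory.ae_restrict_mem measurableSet_Ioo] with t ht
    exact (h t ht).symm
  exact h2.congr_set_ae MeasureTheory.Ioo_ae_eq_Ioc.symm

set_option maxHeartbeats 1000000 in
/-- Piecewise linear interpolation at uniform partitions converges in the
second-level signature terms. -/
theorem sig_level_two_piecewise_linear_approx
    {d : ℕ} {a b : ℝ} (hab : a < b) (f : ℝ → Fin d → ℝ)
    (hf : ContDiffOn ℝ 1 f (Set.Icc a b))
    (fn : ℕ → ℝ → Fin d → ℝ)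
    (hfn : ∀ n : ℕ, 0 < n → ∀ k : ℕ, k < n →
      ∀ t ∈ Set.Icc (a + k * (b - a) / n) (a + (k + 1) * (b - a) / n),
        fn n t = f (a + k * (b - a) / n)
          + ((t - (a + k * (b - a) / n)) / ((b - a) / n))
            • (f (a + (k + 1) * (b - a) / n) - f (a + k * (b - a) / n)))
    (i j : Fin d) :
    Filter.Tendsto (fun n => S2 (fn n) a b i j) Filter.atTop
      (nhds (S2 f a b i j)) := by
  classical
  -- derivatives of the components
  set g : Fin d → ℝ → ℝ := fun m => derivWithin (fun t => f t m) (Set.Icc a b) with hgdef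
  have hFc : ∀ m : Fin d, ContDiffOn ℝ 1 (fun t => f t m) (Set.Icc a b) := fun m =>
    ((ContinuousLinearMap.proj m : (Fin d → ℝ) →L[ℝ] ℝ).contDiff).comp_contDiffOn hf
  have hgc : ∀ m, ContinuousOn (g m) (Set.Icc a b) := fun m =>
    (hFc m).continuousOn_derivWithin (uniqueDiffOn_Icc hab) le_rfl
  have hdiff : ∀ m, ∀ x ∈ Set.Ioo a b, HasDerivAt (fun t => f t m) (g m x) x := by
    intro m x hx
    have hmem : Set.Icc a b ∈ nhds x := Icc_mem_nhds hx.1 hx.2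
    have hd : DifferentiableAt ℝ (fun t => f t m) x :=
      (((hFc m).differentiableOn one_ne_zero) x (Set.Ioo_subset_Icc_self hx)).differentiableAt hmem
    have he : g m x = deriv (fun t => f t m) x := derivWithin_of_mem_nhds hmem
    rw [he]
    exact hd.hasDerivAt
  -- uniform bound on the derivatives of channels i and j
  obtain ⟨Mi, hMi⟩ := isCompact_Icc.exists_bound_of_continuousOn (hgc i)
  obtain ⟨Mj, hMj⟩ := isCompact_Icc.exists_bound_of_continuousOn (hgc j)
  set M : ℝ := max Mi (max Mj 0) with hMdef
  have hM0 : 0 ≤ M := le_max_of_le_right (le_max_right _ _)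
  have hMgi : ∀ t ∈ Set.Icc a b, |g i t| ≤ M := fun t ht =>
    le_trans (by simpa [Real.norm_eq_abs] using hMi t ht) (le_max_left _ _)
  have hMgj : ∀ t ∈ Set.Icc a b, |g j t| ≤ M := fun t ht =>
    le_trans (by simpa [Real.norm_eq_abs] using hMj t ht)
      (le_trans (le_max_left _ _) (le_max_right _ _))
  -- FTC on subintervals
  have hFTC : ∀ m : Fin d, ∀ u v : ℝ, a ≤ u → u ≤ v → v ≤ b →
      (∫ t in u..v, g m t) = f v m - f u m := by
    intro m u v hau huv hvb
    refine intervalIntegral.integral_eq_sub_of_hasDeriv_right_of_le huv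
      (((hFc m).continuousOn).mono (Set.Icc_subset_Icc hau hvb))
      (fun x hx => (hdiff m x ⟨lt_of_le_of_lt hau hx.1, lt_of_lt_of_le hx.2 hvb⟩).hasDerivWithinAt)
      (((hgc m).mono (Set.Icc_subset_Icc hau hvb)).intervalIntegrable_of_Icc huv)
  -- Lipschitz-type bound
  have hLip : ∀ m : Fin d, (∀ t ∈ Set.Icc a b, |g m t| ≤ M) → ∀ u v : ℝ,
      a ≤ u → u ≤ v → v ≤ b → |f v m - f u m| ≤ M * (v - u) := by
    intro m hb' u v hau huv hvb
    rw [← hFTC m u v hau huv hvb]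
    have hB : ∀ x ∈ Set.uIoc u v, ‖g m x‖ ≤ M := by
      intro x hx
      rw [Set.uIoc_of_le huv] at hx
      exact hb' x ⟨hau.trans hx.1.le, hx.2.trans hvb⟩
    have hnn := intervalIntegral.norm_integral_le_of_norm_le_const hB
    simpa [Real.norm_eq_abs, abs_of_nonneg (sub_nonneg.2 huv)] using hnn
  set C : ℝ := 2 * M ^ 2 * (b - a) ^ 2 with hCdef
  -- key quantitative estimate
  have key : ∀ n : ℕ, 0 < n → |S2 (fn n) a b i j - S2 f a b i j| ≤ C / n := by
    intro n hn
    have hn' : (0 : ℝ) < n := by exact_mod_cast hn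
    set h : ℝ := (b - a) / n with hhdef
    have hh0 : 0 < h := div_pos (sub_pos.2 hab) hn'
    set T : ℕ → ℝ := fun k => a + k * h with hTdef
    have hT0 : T 0 = a := by simp [hTdef]
    have hTn : T n = b := by
      simp only [hTdef, hhdef]
      field_simp
      ring
    have hTs : ∀ k : ℕ, T (k + 1) = T k + h := by
      intro k; simp only [hTdef]; push_cast; ring
    have hTa : ∀ k : ℕ, a ≤ T k := fun k =>
      le_add_of_nonneg_right (mul_nonneg (Nat.cast_nonneg k) hh0.le)
    have hTb : ∀ k : ℕ, k ≤ n → T k ≤ b := by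
      intro k hk
      have hkn : (k : ℝ) ≤ n := by exact_mod_cast hk
      have h1 : T k ≤ T n := by
        simp only [hTdef]
        nlinarith [hh0.le]
      rwa [hTn] at h1
    have hTlt : ∀ k : ℕ, T k < T (k + 1) := by
      intro k; rw [hTs]; linarith
    -- clean form of the interpolation hypothesis
    have hfn' : ∀ k : ℕ, k < n → ∀ t ∈ Set.Icc (T k) (T (k + 1)), ∀ m : Fin d,
        fn n t m = f (T k) m + ((t - T k) / h) * (f (T (k + 1)) m - f (T k) m) := by
      intro k hk t ht m
      have e1 : a + (k : ℝ) * (b - a) / n = T k := by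
        simp only [hTdef, hhdef]; ring
      have e2 : a + ((k : ℝ) + 1) * (b - a) / n = T (k + 1) := by
        simp only [hTdef, hhdef]; push_cast; ring
      have h0 := hfn n hn k hk t (by rw [e1, e2]; exact ht)
      rw [e1, e2] at h0
      have h1 := congrFun h0 m
      simpa [hhdef] using h1
    -- value at a
    have hfa : ∀ m : Fin d, fn n a m = f a m := by
      intro m
      have ha1 : a ∈ Set.Icc (T 0) (T 1) := by
        constructor
        · rw [hT0]
        · rw [← hT0]; exact (hTlt 0).le
      have h1 := hfn' 0 hn a ha1 m
      rw [hT0] at h1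
      simpa using h1
    -- derivative of the interpolation on open subintervals
    have hfnderiv : ∀ k : ℕ, k < n → ∀ t ∈ Set.Ioo (T k) (T (k + 1)),
        deriv (fun s => fn n s j) t = (f (T (k + 1)) j - f (T k) j) / h := by
      intro k hk t ht
      have heq : (fun s => fn n s j) =ᶠ[nhds t]
          (fun s => f (T k) j + ((s - T k) / h) * (f (T (k + 1)) j - f (T k) j)) := by
        filter_upwards [Ioo_mem_nhds ht.1 ht.2] with s hs
        exact hfn' k hk s (Set.Ioo_subset_Icc_self hs) j
      rw [heq.deriv_eq]
      have hd : HasDerivAt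
          (fun s => f (T k) j + ((s - T k) / h) * (f (T (k + 1)) j - f (T k) j))
          (1 / h * (f (T (k + 1)) j - f (T k) j)) t :=
        HasDerivAt.const_add _ ((((hasDerivAt_id t).sub_const (T k)).div_const h).mul_const _)
      rw [hd.deriv]
      ring
    -- per-subinterval estimate
    have hstep : ∀ k : ℕ, k < n →
        |(∫ t in T k..T (k + 1), (fn n t i - fn n a i) * deriv (fun s => fn n s j) t)
          - (∫ t in T k..T (k + 1), (f t i - f a i) * deriv (fun s => f s j) t)|
          ≤ 2 * M ^ 2 * h ^ 2 := by
      intro k hk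
      have hau : a ≤ T k := hTa k
      have huv : T k ≤ T (k + 1) := (hTlt k).le
      have hvb : T (k + 1) ≤ b := hTb (k + 1) hk
      set u := T k with hu
      set v := T (k + 1) with hv
      have hvu : v - u = h := by rw [hv, hu, hTs]; ring
      set Δi : ℝ := f v i - f u i with hΔi
      set Δj : ℝ := f v j - f u j with hΔj
      have hΔib : |Δi| ≤ M * h := by
        have h1 := hLip i hMgi u v hau huv hvb
        rwa [hvu] at h1
      have hΔjb : |Δj| ≤ M * h := by
        have h1 := hLip j hMgj u v hau huv hvb
        rwa [hvu] at h1
      -- the fn-integral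
      have Efn : (∫ t in u..v, (fn n t i - fn n a i) * deriv (fun s => fn n s j) t)
          = (∫ t in u..v, ((f u i - f a i) * (Δj / h) + ((t - u) / h) * Δi * (Δj / h))) := by
        apply integral_congr_Ioo huv
        intro t ht
        rw [hfnderiv k hk t ht, hfn' k hk t (Set.Ioo_subset_Icc_self ht) i, hfa i]
        ring
      -- the f-integral
      have Ef : (∫ t in u..v, (f t i - f a i) * deriv (fun s => f s j) t)
          = (∫ t in u..v, ((f t i - f u i) * g j t + (f u i - f a i) * g j t)) := by
        apply integral_congr_Ioo huv
        intro t ht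
        have htab : t ∈ Set.Ioo a b := ⟨hau.trans_lt ht.1, ht.2.trans_le hvb⟩
        rw [(hdiff j t htab).deriv]
        ring
      -- integrability facts on [u,v]
      have hcontg : ContinuousOn (g j) (Set.Icc u v) :=
        (hgc j).mono (Set.Icc_subset_Icc hau hvb)
      have hcontF : ContinuousOn (fun t => f t i) (Set.Icc u v) :=
        ((hFc i).continuousOn).mono (Set.Icc_subset_Icc hau hvb)
      have I1 : IntervalIntegrable (fun t => (f t i - f u i) * g j t) volume u v :=
        ((hcontF.sub continuousOn_const).mul hcontg).intervalIntegrable_of_Icc huv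
      have I2 : IntervalIntegrable (fun t => (f u i - f a i) * g j t) volume u v :=
        (continuousOn_const.mul hcontg).intervalIntegrable_of_Icc huv
      have I3 : IntervalIntegrable (fun t : ℝ => ((t - u) / h) * Δi * (Δj / h)) volume u v := by
        apply Continuous.intervalIntegrable
        exact ((((continuous_id.sub continuous_const).div_const h).mul
          continuous_const).mul continuous_const)
      -- compute the common main term
      have hmain2 : (∫ t in u..v, (f u i - f a i) * g j t) = (f u i - f a i) * Δj := by
        rw [intervalIntegral.integral_const_mul, hFTC j u v hau huv hvb]
      have hmain1 : (∫ _t in u..v, (f u i - f a i) * (Δj / h) : ℝ)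
          = (f u i - f a i) * Δj := by
        rw [intervalIntegral.integral_const, hvu, smul_eq_mul]
        field_simp
      -- remainder bounds
      have hR1 : |∫ t in u..v, ((t - u) / h) * Δi * (Δj / h)| ≤ M ^ 2 * h ^ 2 := by
        have hB : ∀ x ∈ Set.uIoc u v, ‖((x - u) / h) * Δi * (Δj / h)‖ ≤ M ^ 2 * h := by
          intro x hx
          rw [Set.uIoc_of_le huv] at hx
          have hx1 : 0 ≤ (x - u) / h := div_nonneg (by linarith [hx.1.le]) hh0.le
          have hx2 : (x - u) / h ≤ 1 := by
            rw [div_le_one hh0]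
            have hxv : x ≤ v := hx.2
            linarith [hvu]
          have h3 : |Δj| / h ≤ M := by
            rw [div_le_iff₀ hh0]
            linarith [hΔjb]
          rw [Real.norm_eq_abs, abs_mul, abs_mul, abs_of_nonneg hx1, abs_div,
            abs_of_pos hh0]
          have h4 : 0 ≤ |Δj| / h := div_nonneg (abs_nonneg _) hh0.le
          calc (x - u) / h * |Δi| * (|Δj| / h)
              ≤ 1 * (M * h) * M := by
                apply mul_le_mul (mul_le_mul hx2 hΔib (abs_nonneg _) zero_le_one) h3 h4
                positivity
            _ = M ^ 2 * h := by ring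
        have hnn := intervalIntegral.norm_integral_le_of_norm_le_const hB
        rw [Real.norm_eq_abs] at hnn
        calc |∫ t in u..v, ((t - u) / h) * Δi * (Δj / h)| ≤ M ^ 2 * h * |v - u| := hnn
          _ = M ^ 2 * h ^ 2 := by rw [hvu, abs_of_nonneg hh0.le]; ring
      have hR2 : |∫ t in u..v, (f t i - f u i) * g j t| ≤ M ^ 2 * h ^ 2 := by
        have hB : ∀ x ∈ Set.uIoc u v, ‖(f x i - f u i) * g j x‖ ≤ M * h * M := by
          intro x hx
          rw [Set.uIoc_of_le huv] at hx
          have hxab : x ∈ Set.Icc a b := ⟨hau.trans hx.1.le, hx.2.trans hvb⟩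
          have h1 : |f x i - f u i| ≤ M * h := by
            have h2 := hLip i hMgi u x hau hx.1.le (hx.2.trans hvb)
            refine h2.trans ?_
            have hxu : x - u ≤ h := by linarith [hx.2, hvu]
            nlinarith [hM0, hx.1.le]
          rw [Real.norm_eq_abs, abs_mul]
          exact mul_le_mul h1 (hMgj x hxab) (abs_nonneg _) (by positivity)
        have hnn := intervalIntegral.norm_integral_le_of_norm_le_const hB
        rw [Real.norm_eq_abs] at hnn
        calc |∫ t in u..v, (f t i - f u i) * g j t| ≤ M * h * M * |v - u| := hnn
          _ = M ^ 2 * h ^ 2 := by rw [hvu, abs_of_nonneg hh0.le]; ring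
      -- put together
      rw [Efn, Ef,
        intervalIntegral.integral_add intervalIntegrable_const I3,
        intervalIntegral.integral_add I1 I2,
        hmain1, hmain2]
      have hre : ((f u i - f a i) * Δj + (∫ t in u..v, ((t - u) / h) * Δi * (Δj / h)))
          - ((∫ t in u..v, (f t i - f u i) * g j t) + (f u i - f a i) * Δj)
          = (∫ t in u..v, ((t - u) / h) * Δi * (Δj / h))
            - (∫ t in u..v, (f t i - f u i) * g j t) := by ring
      rw [hre]
      calc |(∫ t in u..v, ((t - u) / h) * Δi * (Δj / h))
            - (∫ t in u..v, (f t i - f u i) * g j t)|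
          ≤ |∫ t in u..v, ((t - u) / h) * Δi * (Δj / h)|
            + |∫ t in u..v, (f t i - f u i) * g j t| := abs_sub _ _
        _ ≤ M ^ 2 * h ^ 2 + M ^ 2 * h ^ 2 := add_le_add hR1 hR2
        _ = 2 * M ^ 2 * h ^ 2 := by ring
    -- interval integrability of the two global integrands on each subinterval
    have hIf : ∀ k < n, IntervalIntegrable
        (fun t => (f t i - f a i) * deriv (fun s => f s j) t) volume (T k) (T (k + 1)) := by
      intro k hk
      have hau : a ≤ T k := hTa k
      have hvb : T (k + 1) ≤ b := hTb (k + 1) hk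
      refine intervalIntegrable_of_eqOn_Ioo (hTlt k).le
        (ψ := fun t => (f t i - f a i) * g j t) ?_ ?_
      · intro t ht
        have htab : t ∈ Set.Ioo a b := ⟨hau.trans_lt ht.1, ht.2.trans_le hvb⟩
        rw [(hdiff j t htab).deriv]
      · exact ((((hFc i).continuousOn).mono (Set.Icc_subset_Icc hau hvb)).sub
          continuousOn_const).mul ((hgc j).mono (Set.Icc_subset_Icc hau hvb))
    have hIfn : ∀ k < n, IntervalIntegrable
        (fun t => (fn n t i - fn n a i) * deriv (fun s => fn n s j) t) volume
        (T k) (T (k + 1)) := by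
      intro k hk
      refine intervalIntegrable_of_eqOn_Ioo (hTlt k).le
        (ψ := fun t => (f (T k) i + ((t - T k) / h) * (f (T (k + 1)) i - f (T k) i) - f a i)
          * ((f (T (k + 1)) j - f (T k) j) / h)) ?_ ?_
      · intro t ht
        rw [hfnderiv k hk t ht, hfn' k hk t (Set.Ioo_subset_Icc_self ht) i, hfa i]
      · apply Continuous.continuousOn
        exact (((continuous_const.add (((continuous_id.sub continuous_const).div_const h).mul
          continuous_const)).sub continuous_const).mul continuous_const)
    -- split the global integrals
    have hSf : S2 f a b i j
        = ∑ k ∈ Finset.range n, ∫ t in T k..T (k + 1),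
            (f t i - f a i) * deriv (fun s => f s j) t := by
      have hs := intervalIntegral.sum_integral_adjacent_intervals hIf
      rw [hT0, hTn] at hs
      rw [S2]
      exact hs.symm
    have hSfn : S2 (fn n) a b i j
        = ∑ k ∈ Finset.range n, ∫ t in T k..T (k + 1),
            (fn n t i - fn n a i) * deriv (fun s => fn n s j) t := by
      have hs := intervalIntegral.sum_integral_adjacent_intervals hIfn
      rw [hT0, hTn] at hs
      rw [S2]
      exact hs.symm
    rw [hSf, hSfn, ← Finset.sum_sub_distrib]
    calc |∑ k ∈ Finset.range n,
            ((∫ t in T k..T (k + 1), (fn n t i - fn n a i) * deriv (fun s => fn n s j) t)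
              - ∫ t in T k..T (k + 1), (f t i - f a i) * deriv (fun s => f s j) t)|
        ≤ ∑ k ∈ Finset.range n, (2 * M ^ 2 * h ^ 2) := by
          refine (Finset.abs_sum_le_sum_abs _ _).trans (Finset.sum_le_sum ?_)
          intro k hk
          exact hstep k (Finset.mem_range.mp hk)
      _ = n * (2 * M ^ 2 * h ^ 2) := by rw [Finset.sum_const, Finset.card_range]; ring
      _ = C / n := by
          rw [hCdef, hhdef]
          field_simp
  -- conclude
  have h0 : Tendsto (fun n : ℕ => S2 (fn n) a b i j - S2 f a b i j) atTop (nhds 0) := by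
    refine squeeze_zero_norm' ?_ (tendsto_const_div_atTop_nhds_zero_nat C)
    filter_upwards [eventually_ge_atTop 1] with n hn
    simpa [Real.norm_eq_abs] using key n hn
  have hfin := h0.add_const (S2 f a b i j)
  simpa using hfin
end
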